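/- Let P consist of M i.i.d. uniformly random measurement strings in {X,Y,Z}^n and let O = [o_1,…,o_L] be Pauli observables. Then E_P[Conf_ε(O;P)] = ∑_{ℓ=1}^L (1 − ν/3^{w(o_ℓ)})^M with ν = 1 − exp(−ε²/2). -/

import Mathlib

inductive Pauli | I | X | Y | Z
deriving DecidableEq

instance : Fintype Pauli :=
  ⟨⟨{Pauli.I, Pauli.X, Pauli.Y, Pauli.Z}, by decide⟩, fun x => by cases x <;> decide⟩

inductive Axis | X | Y | Z
deriving DecidableEq

instance : Fintype Axis :=
  ⟨⟨{Axis.X, Axis.Y, Axis.Z}, by decide⟩, fun x => by cases x <;> decide⟩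

def Axis.toPauli : Axis → Pauli
  | .X => .X
  | .Y => .Y
  | .Z => .Z

/-- single-qubit hitting relation: `o = I` or `o = p`. -/
def hit1 (o : Pauli) (p : Axis) : Prop := o = Pauli.I ∨ o = p.toPauli

instance (o : Pauli) (p : Axis) : Decidable (hit1 o p) := by unfold hit1; infer_instance

/-- `o ▷ p`: every coordinate of `o` is `I` or matches `p`. -/
def hits {n : ℕ} (o : Fin n → Pauli) (p : Fin n → Axis) : Prop := ∀ k, hit1 (o k) (p k)

instance {n : ℕ} (o : Fin n → Pauli) (p : Fin n → Axis) : Decidable (hits o p) := by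
  unfold hits; infer_instance

/-- weight: number of non-identity coordinates. -/
def weight {n : ℕ} (o : Fin n → Pauli) : ℕ :=
  (Finset.univ.filter (fun k => o k ≠ Pauli.I)).card

/-- hitting count of `o` among the measurements `P`. -/
def hitCount {n M : ℕ} (o : Fin n → Pauli) (P : Fin M → Fin n → Axis) : ℕ :=
  (Finset.univ.filter (fun m => hits o (P m))).card

/-- the confidence bound. -/
noncomputable def Conf {n M L : ℕ} (ε : ℝ) (O : Fin L → Fin n → Pauli)
    (P : Fin M → Fin n → Axis) : ℝ :=
  ∑ ℓ, Real.exp (-(ε ^ 2 / 2) * (hitCount (O ℓ) P))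

/-!
Measuring the `m`-th string multiplies the weight `exp (-(ε²/2) · hitCount)` by `exp (-ε²/2)`
when it hits `o` and by `1` otherwise, so the weight is a product over independent measurements
and its mean is the `M`-th power of the mean of a single factor. A uniformly random string hits
`o` exactly when each of the `weight o` non-identity qubits is measured in the matching basis,
which happens with probability `3 ^ (-weight o)`.
-/

open Finset

theorem Axis.card_eq : Fintype.card Axis = 3 := rfl

theorem prod_ite_eq_pow_card_filter {ι M : Type*} [Fintype ι] [CommMonoid M] (p : ι → Prop)
    [DecidablePred p] (x : M) : ∏ i, (if p i then x else 1) = x ^ #{i | p i} := by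
  rw [← prod_filter, prod_const]

theorem card_filter_hit1_mul (o : Pauli) :
    #{a | hit1 o a} * (if o ≠ Pauli.I then 3 else 1) = 3 := by
  cases o <;> decide

theorem card_filter_hits_mul_three_pow_weight {n : ℕ} (o : Fin n → Pauli) :
    #{p : Fin n → Axis | hits o p} * 3 ^ weight o = 3 ^ n := by
  have hpi : ({p | hits o p} : Finset (Fin n → Axis))
      = Fintype.piFinset fun k => {a | hit1 (o k) a} := by
    ext p
    simp only [mem_filter, mem_univ, true_and, Fintype.mem_piFinset]
    rfl
  rw [weight, ← prod_ite_eq_pow_card_filter, hpi, Fintype.card_piFinset, ← prod_mul_distrib]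
  simp only [card_filter_hit1_mul, prod_const, card_univ, Fintype.card_fin]

theorem sum_ite_hits {n : ℕ} (o : Fin n → Pauli) (c : ℝ) :
    ∑ p : Fin n → Axis, (if hits o p then c else 1) = 3 ^ n * (1 - (1 - c) / 3 ^ weight o) := by
  have hhits : (#{p | hits o p} : ℝ) * 3 ^ weight o = 3 ^ n := by
    exact_mod_cast card_filter_hits_mul_three_pow_weight o
  have htotal : (#{p | hits o p} : ℝ) + #{p | ¬ hits o p} = 3 ^ n := by
    rw [← Nat.cast_add, card_filter_add_card_filter_not, card_univ, Fintype.card_fun,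
      Axis.card_eq, Fintype.card_fin]
    push_cast
    rfl
  rw [sum_ite, sum_const, sum_const, nsmul_eq_mul, nsmul_eq_mul]
  field_simp
  linear_combination (c - 1) * hhits + 3 ^ weight o * htotal

theorem exp_mul_hitCount {n M : ℕ} (o : Fin n → Pauli) (P : Fin M → Fin n → Axis) (t : ℝ) :
    Real.exp (t * hitCount o P) = ∏ m, if hits o (P m) then Real.exp t else 1 := by
  rw [prod_ite_eq_pow_card_filter, ← Real.exp_nat_mul, mul_comm]
  rfl

theorem sum_exp_mul_hitCount {n : ℕ} (M : ℕ) (o : Fin n → Pauli) (t : ℝ) :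
    ∑ P : Fin M → Fin n → Axis, Real.exp (t * hitCount o P)
      = (3 ^ n * (1 - (1 - Real.exp t) / 3 ^ weight o)) ^ M := by
  simp_rw [exp_mul_hitCount]
  rw [← sum_ite_hits, Fintype.sum_pow]

/-- the expected confidence bound under i.i.d. uniform measurements. -/
theorem stmt7 {n : ℕ} (M L : ℕ) (O : Fin L → Fin n → Pauli) (ε : ℝ) :
    (∑ P : Fin M → Fin n → Axis, Conf ε O P)
        / (Fintype.card (Fin M → Fin n → Axis) : ℝ)
      = ∑ ℓ, (1 - (1 - Real.exp (-(ε ^ 2 / 2))) / 3 ^ weight (O ℓ)) ^ M := by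
  have hcard : (Fintype.card (Fin M → Fin n → Axis) : ℝ) = (3 ^ n) ^ M := by
    simp [Axis.card_eq]
  simp only [Conf]
  rw [sum_comm, sum_div]
  refine sum_congr rfl fun ℓ _ => ?_
  rw [sum_exp_mul_hitCount, hcard, mul_pow, mul_div_cancel_left₀ _ (by positivity)]
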